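/- arXiv:2005.05453 — 2 statements merged into one kernel-verified Lean document; each statement's English description precedes it below -/
import Mathlib

section
/- There exists C > 0 such that for all ε ∈ (0,1]: Σ_{ℓ∈ℤ³} ⟨ℓ⟩_ε^{−2} ≤ C/ε, where the sum converges. -/
open Real

/-- Euclidean norm of a point of `ℤ³`. -/
noncomputable def znorm (k : Fin 3 → ℤ) : ℝ :=
  Real.sqrt (∑ i, ((k i : ℝ)) ^ 2)

/-- The quantity `⟨k⟩_ε = √(1 + ε⁻²·Q(2πε|k|))`. -/
noncomputable def brk (Q : ℝ → ℝ) (ε : ℝ) (k : Fin 3 → ℤ) : ℝ :=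
  Real.sqrt (1 + (ε ^ 2)⁻¹ * Q (2 * π * ε * znorm k))



/-- sup norm of a lattice point, as a natural number -/
def mI (k : Fin 3 → ℤ) : ℕ := Finset.univ.sup fun i => (k i).natAbs

lemma natAbs_le_mI (k : Fin 3 → ℤ) (i : Fin 3) : (k i).natAbs ≤ mI k :=
  Finset.le_sup (f := fun i => (k i).natAbs) (Finset.mem_univ i)

noncomputable def boxF (n : ℕ) : Finset (Fin 3 → ℤ) :=
  Fintype.piFinset fun _ : Fin 3 => Finset.Icc (-(n : ℤ)) (n : ℤ)

lemma mem_boxF {n : ℕ} {k : Fin 3 → ℤ} : k ∈ boxF n ↔ mI k ≤ n := by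
  simp only [boxF, Fintype.mem_piFinset, Finset.mem_Icc, mI, Finset.sup_le_iff,
    Finset.mem_univ, true_implies]
  exact forall_congr' fun i => by omega

lemma card_boxF (n : ℕ) : (boxF n).card = (2 * n + 1) ^ 3 := by
  simp only [boxF, Fintype.card_piFinset, Int.card_Icc]
  rw [Finset.prod_const, Finset.card_univ, Fintype.card_fin]
  congr 1
  omega

lemma card_shell (n : ℕ) :
    ((boxF n).filter (fun k => mI k = n)).card ≤ 26 * (n + 1) ^ 2 := by
  cases n with
  | zero =>
      have h1 : ((boxF 0).filter (fun k => mI k = 0)).card ≤ (boxF 0).card :=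
        Finset.card_le_card (Finset.filter_subset _ _)
      have := card_boxF 0
      omega
  | succ m =>
      have hsub : (boxF (m + 1)).filter (fun k => mI k = m + 1) ⊆ boxF (m + 1) \ boxF m := by
        intro k hk
        rcases Finset.mem_filter.mp hk with ⟨hk1, hk2⟩
        rw [Finset.mem_sdiff, mem_boxF, mem_boxF]
        omega
      have hss : boxF m ⊆ boxF (m + 1) := by
        intro k hk; rw [mem_boxF] at *; omega
      have h1 := Finset.card_le_card hsub
      rw [Finset.card_sdiff_of_subset hss, card_boxF, card_boxF] at h1
      have h2 : (2 * (m + 1) + 1) ^ 3 = (2 * m + 1) ^ 3 + (24 * m ^ 2 + 48 * m + 26) := by ring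
      have h3 : 24 * m ^ 2 + 48 * m + 26 ≤ 26 * (m + 1 + 1) ^ 2 := by nlinarith
      omega

lemma shell_sum (g : ℕ → ℝ) (hg : ∀ n, 0 ≤ g n)
    (hsum : Summable fun n : ℕ => ((n : ℝ) + 1) ^ 2 * g n) :
    Summable (fun k : Fin 3 → ℤ => g (mI k)) ∧
      ∑' k : Fin 3 → ℤ, g (mI k) ≤ 26 * ∑' n : ℕ, ((n : ℝ) + 1) ^ 2 * g n := by
  have hw : ∀ n : ℕ, 0 ≤ ((n : ℝ) + 1) ^ 2 * g n := fun n =>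
    mul_nonneg (by positivity) (hg n)
  have key : ∀ u : Finset (Fin 3 → ℤ),
      ∑ k ∈ u, g (mI k) ≤ 26 * ∑' n : ℕ, ((n : ℝ) + 1) ^ 2 * g n := by
    intro u
    rw [← Finset.sum_fiberwise_of_maps_to
      (fun k hk => Finset.mem_image_of_mem mI hk) (fun k => g (mI k))]
    have step1 : ∀ n ∈ u.image mI,
        ∑ k ∈ u.filter (fun k => mI k = n), g (mI k) ≤ 26 * (((n : ℝ) + 1) ^ 2 * g n) := by
      intro n _
      have heq : ∑ k ∈ u.filter (fun k => mI k = n), g (mI k)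
          = ((u.filter (fun k => mI k = n)).card : ℝ) * g n := by
        rw [Finset.sum_congr rfl (fun k hk => by rw [(Finset.mem_filter.mp hk).2])]
        simp [Finset.sum_const, nsmul_eq_mul]
      rw [heq]
      have hcard : (u.filter (fun k => mI k = n)).card ≤ 26 * (n + 1) ^ 2 := by
        refine le_trans (Finset.card_le_card ?_) (card_shell n)
        intro k hk
        rcases Finset.mem_filter.mp hk with ⟨_, hk2⟩
        exact Finset.mem_filter.mpr ⟨mem_boxF.mpr hk2.le, hk2⟩
      calc ((u.filter (fun k => mI k = n)).card : ℝ) * g n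
          ≤ ((26 * (n + 1) ^ 2 : ℕ) : ℝ) * g n := by
            exact mul_le_mul_of_nonneg_right (Nat.cast_le.mpr hcard) (hg n)
        _ = 26 * (((n : ℝ) + 1) ^ 2 * g n) := by push_cast; ring
    calc ∑ n ∈ u.image mI, ∑ k ∈ u.filter (fun k => mI k = n), g (mI k)
        ≤ ∑ n ∈ u.image mI, 26 * (((n : ℝ) + 1) ^ 2 * g n) := Finset.sum_le_sum step1
      _ = 26 * ∑ n ∈ u.image mI, ((n : ℝ) + 1) ^ 2 * g n := by rw [Finset.mul_sum]
      _ ≤ 26 * ∑' n : ℕ, ((n : ℝ) + 1) ^ 2 * g n := by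
          have := Summable.sum_le_tsum (u.image mI) (fun n _ => hw n) hsum
          linarith
  have hs : Summable (fun k : Fin 3 → ℤ => g (mI k)) :=
    summable_of_sum_le (fun k => hg _) key
  exact ⟨hs, Summable.tsum_le_of_sum_le hs key⟩


lemma znorm_nonneg (k : Fin 3 → ℤ) : 0 ≤ znorm k := Real.sqrt_nonneg _

lemma cast_natAbs_sq (m : ℤ) : (((m.natAbs : ℝ)) ^ 2) = ((m : ℝ)) ^ 2 := by
  rw [Nat.cast_natAbs]; push_cast; rw [sq_abs]

lemma mI_le_znorm (k : Fin 3 → ℤ) : ((mI k : ℕ) : ℝ) ≤ znorm k := by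
  obtain ⟨i, _, hi⟩ := Finset.exists_mem_eq_sup Finset.univ Finset.univ_nonempty
    (fun i => (k i).natAbs)
  have h1 : ((mI k : ℕ) : ℝ) ^ 2 ≤ ∑ j, ((k j : ℝ)) ^ 2 := by
    rw [show mI k = (k i).natAbs from hi, cast_natAbs_sq]
    exact Finset.single_le_sum (f := fun j => ((k j : ℝ)) ^ 2)
      (fun j _ => sq_nonneg _) (Finset.mem_univ i)
  calc ((mI k : ℕ) : ℝ) = Real.sqrt (((mI k : ℕ) : ℝ) ^ 2) :=
        (Real.sqrt_sq (Nat.cast_nonneg _)).symm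
    _ ≤ znorm k := Real.sqrt_le_sqrt h1

lemma znorm_le_two_mI (k : Fin 3 → ℤ) : znorm k ≤ 2 * ((mI k : ℕ) : ℝ) := by
  have heach : ∀ j, ((k j : ℝ)) ^ 2 ≤ ((mI k : ℕ) : ℝ) ^ 2 := by
    intro j
    rw [← cast_natAbs_sq]
    have h1 : (((k j).natAbs : ℝ)) ≤ ((mI k : ℕ) : ℝ) := Nat.cast_le.mpr (natAbs_le_mI k j)
    exact pow_le_pow_left₀ (Nat.cast_nonneg _) h1 2
  have h : ∑ j, ((k j : ℝ)) ^ 2 ≤ (2 * ((mI k : ℕ) : ℝ)) ^ 2 := by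
    calc ∑ j, ((k j : ℝ)) ^ 2 ≤ ∑ _j : Fin 3, ((mI k : ℕ) : ℝ) ^ 2 :=
          Finset.sum_le_sum (fun j _ => heach j)
      _ = 3 * ((mI k : ℕ) : ℝ) ^ 2 := by
          rw [Finset.sum_const, Finset.card_univ, Fintype.card_fin]; push_cast; ring
      _ ≤ (2 * ((mI k : ℕ) : ℝ)) ^ 2 := by nlinarith [sq_nonneg ((mI k : ℕ) : ℝ)]
  calc znorm k ≤ Real.sqrt ((2 * ((mI k : ℕ) : ℝ)) ^ 2) := Real.sqrt_le_sqrt h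
    _ = 2 * ((mI k : ℕ) : ℝ) := Real.sqrt_sq (by positivity)

lemma znorm_eq_zero_of_mI (k : Fin 3 → ℤ) (h : mI k = 0) : znorm k = 0 := by
  have : ∀ j, k j = 0 := by
    intro j
    have := natAbs_le_mI k j
    omega
  simp [znorm, this]


lemma step_lemma {s : ℝ} (hs : 0 < s) (hs1 : s ≤ 1) {x : ℝ} (hx : 1 ≤ x) :
    s * (x + 1) ^ (-(1 + s)) ≤ x ^ (-s) - (x + 1) ^ (-s) := by
  have hx1 : (0:ℝ) < x + 1 := by linarith
  set u : ℝ := (x + 1)⁻¹ with hu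
  have hu0 : 0 < u := by positivity
  have hu2 : u ≤ 1 / 2 := by
    rw [hu]
    rw [inv_le_comm₀ (by linarith) (by norm_num)]
    norm_num; linarith
  have h1u : 0 < 1 - u := by linarith
  have hxu : x = (x + 1) * (1 - u) := by
    rw [hu]; field_simp; ring
  have hb : (1 - u) ^ s ≤ 1 - s * u := by
    have h := rpow_one_add_le_one_add_mul_self (s := -u) (by linarith) hs.le hs1
    rw [show (1:ℝ) + -u = 1 - u by ring] at h
    linarith
  have h1su : 0 < 1 - s * u := by nlinarith
  have hbpos : 0 < (1 - u) ^ s := rpow_pos_of_pos h1u s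
  have hinv : 1 + s * u ≤ ((1 - u) ^ s)⁻¹ := by
    have h2 : (1 + s * u) * (1 - s * u) ≤ 1 := by nlinarith [sq_nonneg (s * u)]
    have h3 : 1 + s * u ≤ (1 - s * u)⁻¹ := by
      rw [← mul_le_mul_iff_of_pos_right h1su, inv_mul_cancel₀ h1su.ne']
      exact h2
    refine le_trans h3 ?_
    exact inv_anti₀ hbpos hb
  have hmono : (x + 1) ^ (-s) * (1 + s * u) ≤ x ^ (-s) := by
    conv_rhs => rw [hxu]
    rw [Real.mul_rpow hx1.le h1u.le]
    have : (1 - u) ^ (-s) = ((1 - u) ^ s)⁻¹ := by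
      rw [Real.rpow_neg h1u.le]
    rw [this]
    have hp : 0 < (x + 1) ^ (-s) := rpow_pos_of_pos hx1 _
    exact mul_le_mul_of_nonneg_left hinv hp.le
  have hsplit : (x + 1) ^ (-(1 + s)) = (x + 1) ^ (-s) * u := by
    rw [hu, show -(1 + s) = -s + -1 by ring, Real.rpow_add hx1, Real.rpow_neg_one]
  nlinarith [rpow_pos_of_pos hx1 (-s)]


lemma tail_bound {s : ℝ} (hs : 0 < s) (hs1 : s ≤ 1) {N : ℕ} (hN : 1 ≤ N) :
    Summable (fun n : ℕ => if N ≤ n then (((n : ℝ)) ^ ((1:ℝ) + s))⁻¹ else 0) ∧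
    (∑' n : ℕ, if N ≤ n then (((n : ℝ)) ^ ((1:ℝ) + s))⁻¹ else 0)
      ≤ (1 + 1 / s) * (((N : ℝ)) ^ s)⁻¹ := by
  have hNR : (1:ℝ) ≤ (N : ℝ) := by exact_mod_cast hN
  have hf0 : ∀ n : ℕ, 0 ≤ if N ≤ n then (((n : ℝ)) ^ ((1:ℝ) + s))⁻¹ else 0 := by
    intro n; split
    · positivity
    · exact le_refl 0
  have hsummable : Summable (fun n : ℕ => if N ≤ n then (((n : ℝ)) ^ ((1:ℝ) + s))⁻¹ else 0) := by
    refine Summable.of_nonneg_of_le hf0 (f := fun n : ℕ => (((n:ℝ)) ^ ((1:ℝ)+s))⁻¹)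
      (fun n => ?_) ((Real.summable_nat_rpow_inv).mpr (by linarith))
    split
    · exact le_refl _
    · positivity
  refine ⟨hsummable, Summable.tsum_le_of_sum_le hsummable ?_⟩
  intro u
  obtain ⟨M, hM⟩ : ∃ M : ℕ, ∀ n ∈ u, n ≤ M := ⟨u.sup id, fun n hn => Finset.le_sup (f := id) hn⟩
  have hB1 : (0:ℝ) ≤ 1 + 1 / s := by positivity
  have hBnn : (0:ℝ) ≤ (((N : ℝ)) ^ s)⁻¹ := by positivity
  have hsub : ∑ n ∈ u, (if N ≤ n then (((n : ℝ)) ^ ((1:ℝ) + s))⁻¹ else 0)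
      ≤ ∑ n ∈ Finset.Ico N (M + 1), (((n : ℝ)) ^ ((1:ℝ) + s))⁻¹ := by
    rw [← Finset.sum_filter]
    apply Finset.sum_le_sum_of_subset_of_nonneg
    · intro n hn
      rcases Finset.mem_filter.mp hn with ⟨hn1, hn2⟩
      exact Finset.mem_Ico.mpr ⟨hn2, Nat.lt_succ_of_le (hM n hn1)⟩
    · intro n _ _; positivity
  refine le_trans hsub ?_
  by_cases hMN : M + 1 ≤ N
  · rw [Finset.Ico_eq_empty (by omega)]
    simpa using mul_nonneg hB1 hBnn
  · have hNM : N < M + 1 := by omega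
    rw [Finset.sum_eq_sum_Ico_succ_bot hNM]
    have hterm1 : (((N : ℝ)) ^ ((1:ℝ) + s))⁻¹ ≤ (((N : ℝ)) ^ s)⁻¹ := by
      apply inv_anti₀ (by positivity)
      exact Real.rpow_le_rpow_of_exponent_le hNR (by linarith)
    have hterm2 : ∑ n ∈ Finset.Ico (N + 1) (M + 1), (((n : ℝ)) ^ ((1:ℝ) + s))⁻¹
        ≤ (1 / s) * (((N : ℝ)) ^ s)⁻¹ := by
      rw [Finset.sum_Ico_eq_sum_range]
      set L := M + 1 - (N + 1) with hL
      set F : ℕ → ℝ := fun j => ((N : ℝ) + j) ^ (-s) with hF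
      have hstep : ∀ i ∈ Finset.range L,
          (((N + 1 + i : ℕ) : ℝ) ^ ((1:ℝ) + s))⁻¹ ≤ (1 / s) * (F i - F (i + 1)) := by
        intro i _
        have hx : (1:ℝ) ≤ (N : ℝ) + i := by
          have : (0:ℝ) ≤ (i:ℝ) := Nat.cast_nonneg i
          linarith
        have hst := step_lemma hs hs1 hx
        have hcast : ((N + 1 + i : ℕ) : ℝ) = (N : ℝ) + i + 1 := by push_cast; ring
        have hrw : (((N : ℝ) + i + 1) ^ ((1:ℝ) + s))⁻¹ = ((N : ℝ) + i + 1) ^ (-((1:ℝ) + s)) := by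
          rw [Real.rpow_neg (by linarith)]
        have hFi : F i = ((N : ℝ) + i) ^ (-s) := rfl
        have hFi1 : F (i + 1) = ((N : ℝ) + i + 1) ^ (-s) := by
          rw [hF]; push_cast; ring_nf
        rw [hcast, hrw, hFi, hFi1]
        have hs' : (0:ℝ) ≤ 1 / s := by positivity
        calc ((N:ℝ) + i + 1) ^ (-(1 + s))
            = (1 / s) * (s * ((N:ℝ) + i + 1) ^ (-(1 + s))) := by field_simp
          _ ≤ (1 / s) * (((N:ℝ) + i) ^ (-s) - ((N:ℝ) + i + 1) ^ (-s)) :=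
              mul_le_mul_of_nonneg_left hst hs'
      calc ∑ i ∈ Finset.range L, (((N + 1 + i : ℕ) : ℝ) ^ ((1:ℝ) + s))⁻¹
          ≤ ∑ i ∈ Finset.range L, (1 / s) * (F i - F (i + 1)) := Finset.sum_le_sum hstep
        _ = (1 / s) * (F 0 - F L) := by rw [← Finset.mul_sum, Finset.sum_range_sub' F L]
        _ ≤ (1 / s) * F 0 := by
            have hFL : 0 ≤ F L := Real.rpow_nonneg (by positivity) _
            have : 0 < 1 / s := by positivity
            nlinarith
        _ = (1 / s) * (((N : ℝ)) ^ s)⁻¹ := by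
            have : F 0 = (((N : ℝ)) ^ s)⁻¹ := by
              rw [hF]; push_cast; rw [add_zero, Real.rpow_neg (by positivity)]
            rw [this]
    linarith


lemma Q_low (Q : ℝ → ℝ) (hQcont : ContinuousOn Q (Set.Ici 0))
    (hpos : ∀ z : ℝ, 0 < z → 0 < Q z)
    (hquad : ∀ Λ : ℝ, 0 < Λ → ∃ C : ℝ, 0 < C ∧ ∀ z ∈ Set.Icc (0:ℝ) Λ, |Q z - z ^ 2| ≤ C * z ^ 4) :
    ∃ a : ℝ, 0 < a ∧ ∀ z ∈ Set.Icc (0:ℝ) 1, a * z ^ 2 ≤ Q z := by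
  obtain ⟨C₁, hC₁, hq⟩ := hquad 1 one_pos
  set δ : ℝ := min 1 (1 / (2 * C₁)) with hδ
  have hδ0 : 0 < δ := lt_min one_pos (by positivity)
  have hδ1 : δ ≤ 1 := min_le_left _ _
  have hδC : C₁ * δ ^ 2 ≤ 1 / 2 := by
    have h1 : δ ≤ 1 / (2 * C₁) := min_le_right _ _
    have h2 : δ ^ 2 ≤ δ := by nlinarith
    calc C₁ * δ ^ 2 ≤ C₁ * δ := by nlinarith
      _ ≤ C₁ * (1 / (2 * C₁)) := by nlinarith
      _ = 1 / 2 := by field_simp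
  -- min on [δ, 1]
  obtain ⟨z₀, hz₀mem, hz₀min⟩ :=
    IsCompact.exists_isMinOn (isCompact_Icc (a := δ) (b := 1)) ⟨δ, le_refl δ, hδ1⟩
      (hQcont.mono (fun z hz => le_trans hδ0.le hz.1))
  have hm0 : 0 < Q z₀ := hpos z₀ (lt_of_lt_of_le hδ0 hz₀mem.1)
  refine ⟨min (1/2) (Q z₀), lt_min (by norm_num) hm0, ?_⟩
  intro z hz
  rcases hz with ⟨hz0, hz1⟩
  by_cases hcase : z ≤ δ
  · have habs := hq z ⟨hz0, hz1⟩
    have hge : Q z ≥ z ^ 2 - C₁ * z ^ 4 := by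
      have := abs_le.mp habs
      linarith [this.1]
    have hz2δ : z ^ 2 ≤ δ ^ 2 := by nlinarith
    have h4 : C₁ * z ^ 4 ≤ (1/2) * z ^ 2 := by
      have e1 : C₁ * z ^ 4 = (C₁ * z ^ 2) * z ^ 2 := by ring
      have e2 : C₁ * z ^ 2 ≤ C₁ * δ ^ 2 := by nlinarith
      have e3 : (C₁ * z ^ 2) * z ^ 2 ≤ (C₁ * δ ^ 2) * z ^ 2 :=
        mul_le_mul_of_nonneg_right e2 (by positivity)
      have e4 : (C₁ * δ ^ 2) * z ^ 2 ≤ (1/2) * z ^ 2 :=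
        mul_le_mul_of_nonneg_right hδC (by positivity)
      linarith
    have : min (1/2) (Q z₀) * z ^ 2 ≤ (1/2) * z ^ 2 := by
      apply mul_le_mul_of_nonneg_right (min_le_left _ _) (by positivity)
    nlinarith
  · push_neg at hcase
    have hQz : Q z₀ ≤ Q z := hz₀min ⟨hcase.le, hz1⟩
    have hz2 : z ^ 2 ≤ 1 := by nlinarith
    calc min (1/2) (Q z₀) * z ^ 2 ≤ Q z₀ * z ^ 2 := by
          apply mul_le_mul_of_nonneg_right (min_le_right _ _) (by positivity)
      _ ≤ Q z₀ * 1 := by nlinarith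
      _ ≤ Q z := by linarith


set_option maxHeartbeats 1600000 in
/-- there exists `C > 0` such that for all `ε ∈ (0,1]` the sum
`Σ_{ℓ∈ℤ³} ⟨ℓ⟩_ε^{−2}` converges and is at most `C/ε`. -/
theorem stmt_9 (Q : ℝ → ℝ) (c η : ℝ) (hc : 0 < c) (hη : 0 < η)
    (hQcont : ContinuousOn Q (Set.Ici 0))
    (hQ0 : Q 0 = 0)
    (hquad : ∀ Λ : ℝ, 0 < Λ → ∃ C : ℝ, 0 < C ∧ ∀ z ∈ Set.Icc (0:ℝ) Λ, |Q z - z ^ 2| ≤ C * z ^ 4)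
    (hpos : ∀ z : ℝ, 0 < z → 0 < Q z)
    (hgrowth : ∀ z : ℝ, 1 ≤ z → c * z ^ (3 + η) ≤ Q z) :
    ∃ C : ℝ, 0 < C ∧ ∀ ε ∈ Set.Ioc (0:ℝ) 1,
      Summable (fun ℓ : Fin 3 → ℤ => (brk Q ε ℓ ^ 2)⁻¹) ∧
      (∑' ℓ : Fin 3 → ℤ, (brk Q ε ℓ ^ 2)⁻¹) ≤ C / ε := by
  obtain ⟨a, ha, hQl⟩ := Q_low Q hQcont hpos hquad
  have hπ : (0:ℝ) < π := Real.pi_pos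
  have h2π1 : (1:ℝ) ≤ 2 * π := by nlinarith [Real.pi_gt_three]
  set s : ℝ := min η 1 with hsdef
  have hs0 : 0 < s := lt_min hη one_pos
  have hs1 : s ≤ 1 := min_le_right _ _
  have hsη : s ≤ η := min_le_left _ _
  set A : ℝ := a * (2 * π) ^ 2 with hAdef
  have hA0 : 0 < A := by positivity
  set A₂ : ℝ := c * (2 * π) ^ 3 with hA₂def
  have hA₂0 : 0 < A₂ := by positivity
  set B₁ : ℝ := max 1 (4 / A) with hB₁def
  have hB₁1 : (1:ℝ) ≤ B₁ := le_max_left _ _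
  have hB₁0 : 0 < B₁ := lt_of_lt_of_le one_pos hB₁1
  have hs1s : (0:ℝ) < 1 + 1 / s := by positivity
  refine ⟨26 * (B₁ * (1 + 1 / (2 * π)) + 4 / A₂ * (1 + 1 / s) * (4 * π)), ?_, ?_⟩
  · have h1 : (0:ℝ) < B₁ * (1 + 1 / (2 * π)) := by positivity
    have h2 : (0:ℝ) < 4 / A₂ * (1 + 1 / s) * (4 * π) := by positivity
    nlinarith
  intro ε hε
  obtain ⟨hε0, hε1⟩ := hε
  have hQnn : ∀ z : ℝ, 0 ≤ z → 0 ≤ Q z := by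
    intro z hz
    rcases hz.eq_or_lt with h | h
    · rw [← h, hQ0]
    · exact (hpos z h).le
  have hz0 : ∀ k : Fin 3 → ℤ, 0 ≤ 2 * π * ε * znorm k := fun k =>
    mul_nonneg (by positivity) (znorm_nonneg k)
  have hbrk : ∀ k : Fin 3 → ℤ, brk Q ε k ^ 2 = 1 + (ε ^ 2)⁻¹ * Q (2 * π * ε * znorm k) := by
    intro k
    simp only [brk]
    rw [Real.sq_sqrt]
    have := hQnn _ (hz0 k)
    positivity
  -- the two comparison sequences
  set X : ℝ := A₂ * ε ^ ((1:ℝ) + s) with hXdef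
  have hX0 : 0 < X := mul_pos hA₂0 (rpow_pos_of_pos hε0 _)
  set g₁ : ℕ → ℝ := fun n => if (n:ℝ) ≤ (2 * π * ε)⁻¹ then (1 + A * (n:ℝ) ^ 2)⁻¹ else 0
    with hg₁def
  set g₂ : ℕ → ℝ := fun n => if (1 ≤ n ∧ (4 * π * ε)⁻¹ ≤ (n:ℝ))
      then (X * (n:ℝ) ^ ((3:ℝ) + s))⁻¹ else 0 with hg₂def
  have hg₁0 : ∀ n, 0 ≤ g₁ n := by
    intro n; rw [hg₁def]; dsimp only; split
    · positivity
    · exact le_refl 0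
  have hg₂0 : ∀ n, 0 ≤ g₂ n := by
    intro n; rw [hg₂def]; dsimp only; split
    · have h1 : 0 < (n:ℝ) ^ ((3:ℝ) + s) ∨ True := Or.inr trivial
      positivity
    · exact le_refl 0
  -- pointwise comparison
  have hpt : ∀ k : Fin 3 → ℤ, (brk Q ε k ^ 2)⁻¹ ≤ g₁ (mI k) + g₂ (mI k) := by
    intro k
    have hmle : ((mI k : ℕ) : ℝ) ≤ znorm k := mI_le_znorm k
    have h2πε : (0:ℝ) < 2 * π * ε := by positivity
    by_cases hz1 : 2 * π * ε * znorm k ≤ 1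
    · -- near regime
      have hcond : ((mI k : ℕ) : ℝ) ≤ (2 * π * ε)⁻¹ := by
        rw [show ((2 * π * ε)⁻¹ : ℝ) = 1 / (2 * π * ε) by rw [one_div],
          le_div_iff₀ h2πε]
        calc ((mI k : ℕ) : ℝ) * (2 * π * ε) = 2 * π * ε * ((mI k : ℕ) : ℝ) := by ring
          _ ≤ 2 * π * ε * znorm k := mul_le_mul_of_nonneg_left hmle h2πε.le
          _ ≤ 1 := hz1
      have hQz := hQl _ ⟨hz0 k, hz1⟩
      have hAm : A * ((mI k : ℕ) : ℝ) ^ 2 ≤ (ε ^ 2)⁻¹ * Q (2 * π * ε * znorm k) := by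
        have h1 : (ε ^ 2)⁻¹ * (a * (2 * π * ε * znorm k) ^ 2) = A * (znorm k) ^ 2 := by
          rw [hAdef]; field_simp
        have h2 : A * ((mI k : ℕ) : ℝ) ^ 2 ≤ A * (znorm k) ^ 2 :=
          mul_le_mul_of_nonneg_left (pow_le_pow_left₀ (Nat.cast_nonneg _) hmle 2) hA0.le
        have h3 : (ε ^ 2)⁻¹ * (a * (2 * π * ε * znorm k) ^ 2)
            ≤ (ε ^ 2)⁻¹ * Q (2 * π * ε * znorm k) :=
          mul_le_mul_of_nonneg_left hQz (by positivity)
        linarith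
      have hg₁val : g₁ (mI k) = (1 + A * ((mI k : ℕ) : ℝ) ^ 2)⁻¹ := by
        rw [hg₁def]; exact if_pos hcond
      have hinv : (brk Q ε k ^ 2)⁻¹ ≤ (1 + A * ((mI k : ℕ) : ℝ) ^ 2)⁻¹ := by
        apply inv_anti₀ (by positivity)
        rw [hbrk k]; linarith
      rw [hg₁val]
      linarith [hinv, hg₂0 (mI k)]
    · -- far regime
      push_neg at hz1
      have hznpos : 0 < znorm k := by nlinarith [znorm_nonneg k]
      have hQz := hgrowth _ hz1.le
      have hk1 : 1 ≤ mI k := by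
        rcases Nat.eq_zero_or_pos (mI k) with h0 | h1
        · exfalso
          have := znorm_eq_zero_of_mI k h0
          rw [this] at hz1; norm_num at hz1
        · exact h1
      have hm1 : (1:ℝ) ≤ ((mI k : ℕ) : ℝ) := by exact_mod_cast hk1
      have hrm : znorm k ≤ 2 * ((mI k : ℕ) : ℝ) := znorm_le_two_mI k
      have hcond2 : ((4 * π * ε)⁻¹ : ℝ) ≤ ((mI k : ℕ) : ℝ) := by
        have h4πε : (0:ℝ) < 4 * π * ε := by positivity
        rw [show ((4 * π * ε)⁻¹ : ℝ) = 1 / (4 * π * ε) by rw [one_div],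
          div_le_iff₀ h4πε]
        have hchain : 2 * π * ε * znorm k ≤ 2 * π * ε * (2 * ((mI k : ℕ) : ℝ)) :=
          mul_le_mul_of_nonneg_left hrm h2πε.le
        nlinarith
      have hkey : X * ((mI k : ℕ) : ℝ) ^ ((3:ℝ) + s)
          ≤ (ε ^ 2)⁻¹ * Q (2 * π * ε * znorm k) := by
        have hb1 : 2 * π * ε * ((mI k : ℕ) : ℝ) ≤ 2 * π * ε * znorm k :=
          mul_le_mul_of_nonneg_left hmle h2πε.le
        have hb0 : (0:ℝ) ≤ 2 * π * ε * ((mI k : ℕ) : ℝ) := by positivity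
        have h1 : (2 * π * ε * ((mI k : ℕ) : ℝ)) ^ ((3:ℝ) + s)
            ≤ (2 * π * ε * znorm k) ^ ((3:ℝ) + s) :=
          Real.rpow_le_rpow hb0 hb1 (by linarith)
        have h2 : (2 * π * ε * znorm k) ^ ((3:ℝ) + s) ≤ (2 * π * ε * znorm k) ^ ((3:ℝ) + η) :=
          Real.rpow_le_rpow_of_exponent_le hz1.le (by linarith)
        have h3 : (2 * π * ε * ((mI k : ℕ) : ℝ)) ^ ((3:ℝ) + s)
            = (2 * π) ^ ((3:ℝ) + s) * ε ^ ((3:ℝ) + s) * ((mI k : ℕ) : ℝ) ^ ((3:ℝ) + s) := by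
          rw [show 2 * π * ε * ((mI k : ℕ) : ℝ) = (2 * π) * (ε * ((mI k : ℕ) : ℝ)) by ring,
            Real.mul_rpow (by positivity) (by positivity),
            Real.mul_rpow hε0.le (Nat.cast_nonneg _)]
          ring
        have h4 : ε ^ ((3:ℝ) + s) = ε ^ (2:ℕ) * ε ^ ((1:ℝ) + s) := by
          rw [← Real.rpow_natCast ε 2, ← Real.rpow_add hε0]
          congr 1
          ring
        have h5 : ((2 * π) : ℝ) ^ (3:ℕ) ≤ (2 * π) ^ ((3:ℝ) + s) := by
          calc ((2 * π) : ℝ) ^ (3:ℕ) = (2 * π) ^ ((3:ℕ) : ℝ) := (Real.rpow_natCast _ 3).symm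
            _ ≤ (2 * π) ^ ((3:ℝ) + s) := by
                apply Real.rpow_le_rpow_of_exponent_le h2π1
                push_cast; linarith
        -- combine
        have hQchain : c * (2 * π * ε * ((mI k : ℕ) : ℝ)) ^ ((3:ℝ) + s)
            ≤ Q (2 * π * ε * znorm k) := by
          calc c * (2 * π * ε * ((mI k : ℕ) : ℝ)) ^ ((3:ℝ) + s)
              ≤ c * (2 * π * ε * znorm k) ^ ((3:ℝ) + η) := by
                apply mul_le_mul_of_nonneg_left (le_trans h1 h2) hc.le
            _ ≤ Q (2 * π * ε * znorm k) := hQz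
        have hfinal : X * ((mI k : ℕ) : ℝ) ^ ((3:ℝ) + s)
            ≤ (ε ^ 2)⁻¹ * (c * (2 * π * ε * ((mI k : ℕ) : ℝ)) ^ ((3:ℝ) + s)) := by
          rw [h3, h4, hXdef, hA₂def]
          have hmp : (0:ℝ) ≤ ((mI k : ℕ) : ℝ) ^ ((3:ℝ) + s) := Real.rpow_nonneg (Nat.cast_nonneg _) _
          have hep : (0:ℝ) < ε ^ ((1:ℝ) + s) := rpow_pos_of_pos hε0 _
          have hε2 : (0:ℝ) < ε ^ (2:ℕ) := by positivity
          rw [show (ε ^ (2:ℕ))⁻¹ * (c * ((2 * π) ^ ((3:ℝ) + s) * (ε ^ (2:ℕ) * ε ^ ((1:ℝ) + s))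
              * ((mI k : ℕ) : ℝ) ^ ((3:ℝ) + s)))
            = c * (2 * π) ^ ((3:ℝ) + s) * ε ^ ((1:ℝ) + s) * ((mI k : ℕ) : ℝ) ^ ((3:ℝ) + s)
              * ((ε ^ (2:ℕ))⁻¹ * ε ^ (2:ℕ)) by ring, inv_mul_cancel₀ hε2.ne', mul_one]
          have : c * (2 * π) ^ (3:ℕ) ≤ c * (2 * π) ^ ((3:ℝ) + s) :=
            mul_le_mul_of_nonneg_left h5 hc.le
          nlinarith [mul_le_mul_of_nonneg_right
            (mul_le_mul_of_nonneg_right this hep.le) hmp]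
        calc X * ((mI k : ℕ) : ℝ) ^ ((3:ℝ) + s)
            ≤ (ε ^ 2)⁻¹ * (c * (2 * π * ε * ((mI k : ℕ) : ℝ)) ^ ((3:ℝ) + s)) := hfinal
          _ ≤ (ε ^ 2)⁻¹ * Q (2 * π * ε * znorm k) :=
              mul_le_mul_of_nonneg_left hQchain (by positivity)
      have hg₂val : g₂ (mI k) = (X * ((mI k : ℕ) : ℝ) ^ ((3:ℝ) + s))⁻¹ := by
        rw [hg₂def]; exact if_pos ⟨hk1, hcond2⟩
      have hXm : 0 < X * ((mI k : ℕ) : ℝ) ^ ((3:ℝ) + s) :=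
        mul_pos hX0 (rpow_pos_of_pos (by linarith) _)
      have hinv : (brk Q ε k ^ 2)⁻¹ ≤ (X * ((mI k : ℕ) : ℝ) ^ ((3:ℝ) + s))⁻¹ := by
        apply inv_anti₀ hXm
        rw [hbrk k]; linarith
      rw [hg₂val]
      linarith [hinv, hg₁0 (mI k)]
  -- near weighted sum
  set NR : ℕ := Nat.floor ((2 * π * ε)⁻¹) with hNRdef
  have hg₁support : ∀ n ∉ Finset.range (NR + 1), ((n:ℝ) + 1) ^ 2 * g₁ n = 0 := by
    intro n hn
    rw [Finset.mem_range, not_lt] at hn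
    rw [hg₁def]; dsimp only
    rw [if_neg, mul_zero]
    intro hcon
    have := Nat.le_floor hcon
    omega
  have hsum₁ : Summable (fun n : ℕ => ((n:ℝ) + 1) ^ 2 * g₁ n) :=
    summable_of_ne_finset_zero hg₁support
  have hW₁ : (∑' n : ℕ, ((n:ℝ) + 1) ^ 2 * g₁ n) ≤ B₁ * (1 + 1 / (2 * π)) / ε := by
    rw [tsum_eq_sum hg₁support]
    have hterm : ∀ n ∈ Finset.range (NR + 1), ((n:ℝ) + 1) ^ 2 * g₁ n ≤ B₁ := by
      intro n _
      rw [hg₁def]; dsimp only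
      split
      · rcases Nat.eq_zero_or_pos n with h0 | h1
        · subst h0; norm_num; exact hB₁1
        · have hn1 : (1:ℝ) ≤ (n:ℝ) := by exact_mod_cast h1
          have h4A : ((n:ℝ) + 1) ^ 2 * (1 + A * (n:ℝ) ^ 2)⁻¹ ≤ 4 / A := by
            rw [mul_inv_le_iff₀ (by positivity)]
            have e : 4 / A * (1 + A * (n:ℝ) ^ 2) = 4 / A + 4 * (n:ℝ) ^ 2 := by
              field_simp
            rw [e]
            have : (0:ℝ) < 4 / A := by positivity
            nlinarith
          exact le_trans h4A (le_max_right _ _)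
      · rw [mul_zero]; exact hB₁0.le
    calc ∑ n ∈ Finset.range (NR + 1), ((n:ℝ) + 1) ^ 2 * g₁ n
        ≤ (Finset.range (NR + 1)).card • B₁ := Finset.sum_le_card_nsmul _ _ _ hterm
      _ = ((NR + 1 : ℕ) : ℝ) * B₁ := by
          rw [Finset.card_range, nsmul_eq_mul]
      _ ≤ B₁ * (1 + 1 / (2 * π)) / ε := by
          have hfl : ((NR : ℕ) : ℝ) ≤ (2 * π * ε)⁻¹ := Nat.floor_le (by positivity)
          have hinv1 : (1:ℝ) ≤ ε⁻¹ := by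
            rw [le_inv_comm₀ one_pos hε0]; simpa using hε1
          have hsplit : ((2 * π * ε)⁻¹ : ℝ) = (2 * π)⁻¹ * ε⁻¹ := by
            rw [mul_inv]
          have : ((NR + 1 : ℕ) : ℝ) ≤ (2 * π)⁻¹ * ε⁻¹ + ε⁻¹ := by
            push_cast
            rw [hsplit] at hfl
            linarith
          calc ((NR + 1 : ℕ) : ℝ) * B₁ ≤ ((2 * π)⁻¹ * ε⁻¹ + ε⁻¹) * B₁ :=
                mul_le_mul_of_nonneg_right this hB₁0.le
            _ = B₁ * (1 + 1 / (2 * π)) / ε := by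
                field_simp; ring
  -- far weighted sum
  set Nf : ℕ := max 1 (Nat.ceil ((4 * π * ε)⁻¹)) with hNfdef
  have hNf1 : 1 ≤ Nf := le_max_left _ _
  obtain ⟨htailS, htailB⟩ := tail_bound hs0 hs1 hNf1
  have hg₂le : ∀ n : ℕ, ((n:ℝ) + 1) ^ 2 * g₂ n
      ≤ (4 / X) * (if Nf ≤ n then (((n:ℝ)) ^ ((1:ℝ) + s))⁻¹ else 0) := by
    intro n
    rw [hg₂def]; dsimp only
    by_cases hcnd : 1 ≤ n ∧ ((4 * π * ε)⁻¹ : ℝ) ≤ (n:ℝ)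
    · rw [if_pos hcnd]
      have hNle : Nf ≤ n := max_le hcnd.1 (Nat.ceil_le.mpr hcnd.2)
      rw [if_pos hNle]
      have hn1 : (1:ℝ) ≤ (n:ℝ) := by exact_mod_cast hcnd.1
      have hn0 : (0:ℝ) < (n:ℝ) := lt_of_lt_of_le one_pos hn1
      have hsplit : (n:ℝ) ^ ((3:ℝ) + s) = (n:ℝ) ^ (2:ℕ) * (n:ℝ) ^ ((1:ℝ) + s) := by
        rw [← Real.rpow_natCast (n:ℝ) 2, ← Real.rpow_add hn0]
        congr 1
        ring
      rw [hsplit]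
      have hrp : (0:ℝ) < (n:ℝ) ^ ((1:ℝ) + s) := rpow_pos_of_pos hn0 _
      have e : (X * ((n:ℝ) ^ (2:ℕ) * (n:ℝ) ^ ((1:ℝ) + s)))⁻¹
          = X⁻¹ * ((n:ℝ) ^ (2:ℕ))⁻¹ * ((n:ℝ) ^ ((1:ℝ) + s))⁻¹ := by
        rw [mul_inv, mul_inv]; ring
      rw [e]
      have h5 : ((n:ℝ) + 1) ^ 2 * ((n:ℝ) ^ (2:ℕ))⁻¹ ≤ 4 := by
        rw [mul_inv_le_iff₀ (by positivity)]
        nlinarith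
      calc ((n:ℝ) + 1) ^ 2 * (X⁻¹ * ((n:ℝ) ^ (2:ℕ))⁻¹ * ((n:ℝ) ^ ((1:ℝ) + s))⁻¹)
          = (((n:ℝ) + 1) ^ 2 * ((n:ℝ) ^ (2:ℕ))⁻¹) * (X⁻¹ * ((n:ℝ) ^ ((1:ℝ) + s))⁻¹) := by
            ring
        _ ≤ 4 * (X⁻¹ * ((n:ℝ) ^ ((1:ℝ) + s))⁻¹) :=
            mul_le_mul_of_nonneg_right h5 (by positivity)
        _ = (4 / X) * (((n:ℝ)) ^ ((1:ℝ) + s))⁻¹ := by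
            rw [div_eq_mul_inv]; ring
    · rw [if_neg hcnd, mul_zero]
      apply mul_nonneg (by positivity)
      split
      · positivity
      · exact le_refl 0
  have hsum₂ : Summable (fun n : ℕ => ((n:ℝ) + 1) ^ 2 * g₂ n) := by
    apply Summable.of_nonneg_of_le (fun n => mul_nonneg (by positivity) (hg₂0 n)) hg₂le
    exact htailS.mul_left _
  have hW₂ : (∑' n : ℕ, ((n:ℝ) + 1) ^ 2 * g₂ n) ≤ 4 / A₂ * (1 + 1 / s) * (4 * π) / ε := by
    have h1 := Summable.tsum_le_tsum hg₂le hsum₂ (htailS.mul_left (4 / X))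
    rw [tsum_mul_left] at h1
    have h2 : (4 / X) * (∑' n : ℕ, if Nf ≤ n then (((n:ℝ)) ^ ((1:ℝ) + s))⁻¹ else 0)
        ≤ (4 / X) * ((1 + 1 / s) * (((Nf : ℕ) : ℝ) ^ s)⁻¹) :=
      mul_le_mul_of_nonneg_left htailB (by positivity)
    have h3 : ((4 * π * ε)⁻¹ : ℝ) ≤ ((Nf : ℕ) : ℝ) :=
      le_trans (Nat.le_ceil _) (Nat.cast_le.mpr (le_max_right _ _))
    have h4πε : (0:ℝ) < 4 * π * ε := by positivity
    have h4 : (((4 * π * ε)⁻¹ : ℝ)) ^ s ≤ ((Nf : ℕ) : ℝ) ^ s :=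
      Real.rpow_le_rpow (by positivity) h3 hs0.le
    have h5 : (((Nf : ℕ) : ℝ) ^ s)⁻¹ ≤ ((((4 * π * ε)⁻¹ : ℝ)) ^ s)⁻¹ :=
      inv_anti₀ (rpow_pos_of_pos (by positivity) _) h4
    have h6 : ((((4 * π * ε)⁻¹ : ℝ)) ^ s)⁻¹ = (4 * π * ε) ^ s := by
      rw [← Real.inv_rpow (by positivity), inv_inv]
    have h7 : ((4 * π * ε) : ℝ) ^ s = (4 * π) ^ s * ε ^ s :=
      Real.mul_rpow (by positivity) hε0.le
    have h8 : ((4 * π) : ℝ) ^ s ≤ 4 * π := by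
      calc ((4 * π) : ℝ) ^ s ≤ (4 * π) ^ (1:ℝ) :=
            Real.rpow_le_rpow_of_exponent_le (by nlinarith) hs1
        _ = 4 * π := Real.rpow_one _
    have h9 : ε ^ ((1:ℝ) + s) = ε * ε ^ s := by
      rw [Real.rpow_add hε0, Real.rpow_one]
    have heps : (0:ℝ) < ε ^ s := rpow_pos_of_pos hε0 _
    calc (∑' n : ℕ, ((n:ℝ) + 1) ^ 2 * g₂ n)
        ≤ (4 / X) * ((1 + 1 / s) * (((Nf : ℕ) : ℝ) ^ s)⁻¹) := le_trans h1 h2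
      _ ≤ (4 / X) * ((1 + 1 / s) * ((4 * π) ^ s * ε ^ s)) := by
          apply mul_le_mul_of_nonneg_left _ (by positivity)
          apply mul_le_mul_of_nonneg_left _ hs1s.le
          rw [← h7, ← h6]; exact h5
      _ = 4 / A₂ * (1 + 1 / s) * ((4 * π) ^ s) / ε := by
          rw [hXdef, h9]
          field_simp
      _ ≤ 4 / A₂ * (1 + 1 / s) * (4 * π) / ε := by
          gcongr
  -- assemble
  obtain ⟨hS₁, hT₁⟩ := shell_sum g₁ hg₁0 hsum₁
  obtain ⟨hS₂, hT₂⟩ := shell_sum g₂ hg₂0 hsum₂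
  have hmajS : Summable (fun k : Fin 3 → ℤ => g₁ (mI k) + g₂ (mI k)) := hS₁.add hS₂
  have hTnn : ∀ k : Fin 3 → ℤ, 0 ≤ (brk Q ε k ^ 2)⁻¹ := by
    intro k
    apply inv_nonneg.mpr
    rw [hbrk k]
    have := hQnn _ (hz0 k)
    positivity
  have hSummT : Summable (fun k : Fin 3 → ℤ => (brk Q ε k ^ 2)⁻¹) :=
    Summable.of_nonneg_of_le hTnn hpt hmajS
  refine ⟨hSummT, ?_⟩
  have hle := Summable.tsum_le_tsum hpt hSummT hmajS
  rw [Summable.tsum_add hS₁ hS₂] at hle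
  calc (∑' k : Fin 3 → ℤ, (brk Q ε k ^ 2)⁻¹)
      ≤ (∑' k : Fin 3 → ℤ, g₁ (mI k)) + (∑' k : Fin 3 → ℤ, g₂ (mI k)) := hle
    _ ≤ 26 * (B₁ * (1 + 1 / (2 * π)) / ε) + 26 * (4 / A₂ * (1 + 1 / s) * (4 * π) / ε) := by
        apply add_le_add
        · exact le_trans hT₁ (mul_le_mul_of_nonneg_left hW₁ (by norm_num))
        · exact le_trans hT₂ (mul_le_mul_of_nonneg_left hW₂ (by norm_num))
    _ = 26 * (B₁ * (1 + 1 / (2 * π)) + 4 / A₂ * (1 + 1 / s) * (4 * π)) / ε := by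
        field_simp
end

section
/- Let d ≥ 1 and N ≥ 2 be integers and let Q : [0,∞) → ℝ be N-times continuously differentiable with Q(0) = 0, Q'(0) = 0, Q(z) ≥ c₀·z² for all z ≥ 0 for some c₀ > 0, and such that for every δ > 0 there is C_δ > 0 with |z^m·Q^{(m)}(z)| ≤ C_δ·Q(z)^{1+δ} for all z ≥ 1 and all integers 0 ≤ m ≤ N. Then there exists c > 0 such that for every δ ∈ (0,1) there is C > 0 with the following property: for all r > 0, μ > 0, all integers 0 ≤ m ≤ N, and all ζ ∈ ℝ^d with |ζ| ≥ 1/20, the m-th total (Fréchet) derivative at ζ of the map ζ ↦ exp(−r·Q(μ·|ζ|)) has operator norm at most C·(1 + r^{−δ/2})·exp(−c·r·μ²). -/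
open Real Set

set_option maxHeartbeats 1000000 in

lemma aux_norm_deriv_bound (d N : ℕ) (hd : 1 ≤ d) :
    ∃ K : ℝ, 1 ≤ K ∧ ∀ i : ℕ, 1 ≤ i → i ≤ N →
      ∀ ζ : EuclideanSpace ℝ (Fin d), 1/20 ≤ ‖ζ‖ →
      ‖iteratedFDerivWithin ℝ i (fun x : EuclideanSpace ℝ (Fin d) => ‖x‖)
        ({0}ᶜ) ζ‖ ≤ K ^ i := by
  haveI : Nonempty (Fin d) := ⟨⟨0, hd⟩⟩
  set E := EuclideanSpace ℝ (Fin d)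
  set v : E → ℝ := fun x => ‖x‖ with hvdef
  have hsopen : IsOpen ({0}ᶜ : Set E) := isOpen_compl_singleton
  have hsu : UniqueDiffOn ℝ ({0}ᶜ : Set E) := hsopen.uniqueDiffOn
  have hv : ContDiffOn ℝ N v ({0}ᶜ : Set E) := fun x hx =>
    (contDiffAt_norm ℝ (by simpa using hx)).contDiffWithinAt
  have hsub : Metric.sphere (0:E) 1 ⊆ ({0}ᶜ : Set E) := fun x hx => by
    simp only [mem_sphere_zero_iff_norm] at hx
    simp only [mem_compl_iff, mem_singleton_iff]
    intro h; rw [h] at hx; simp at hx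
  have hne : (Metric.sphere (0:E) 1).Nonempty := NormedSpace.sphere_nonempty.mpr zero_le_one
  have hBex : ∀ i : ℕ, ∃ B : ℝ, ∀ ω : E, ‖ω‖ = 1 → i ≤ N →
      ‖iteratedFDerivWithin ℝ i v ({0}ᶜ) ω‖ ≤ B := by
    intro i
    by_cases hi : i ≤ N
    · obtain ⟨x0, -, hmax⟩ := (isCompact_sphere (0:E) 1).exists_isMaxOn hne
        (((hv.continuousOn_iteratedFDerivWithin (by exact_mod_cast hi) hsu).norm).mono hsub)
      exact ⟨_, fun ω hω _ => hmax (by simpa [mem_sphere_zero_iff_norm] using hω)⟩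
    · exact ⟨0, fun _ _ h => absurd h hi⟩
  choose B hB using hBex
  set M : ℝ := 1 + ∑ j ∈ Finset.range (N+1), |B j| with hMdef
  have hsumnn : (0:ℝ) ≤ ∑ j ∈ Finset.range (N+1), |B j| :=
    Finset.sum_nonneg fun j _ => abs_nonneg _
  have hM1 : 1 ≤ M := by simp only [hMdef]; linarith
  have hMB : ∀ i ≤ N, B i ≤ M := by
    intro i hi
    have : |B i| ≤ ∑ j ∈ Finset.range (N+1), |B j| :=
      Finset.single_le_sum (f := fun j => |B j|) (fun j _ => abs_nonneg _)
        (Finset.mem_range.2 (Nat.lt_succ_of_le hi))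
    calc B i ≤ |B i| := le_abs_self _
      _ ≤ _ := by simp only [hMdef]; linarith
  refine ⟨20 * M, by linarith, ?_⟩
  intro i hi1 hiN ζ hζ
  have hζ0 : ζ ≠ 0 := by
    intro h; rw [h] at hζ; simp at hζ; linarith
  have hζmem : ζ ∈ ({0}ᶜ : Set E) := hζ0
  set lam : ℝ := ‖ζ‖ with hlamdef
  have hlam0 : 0 < lam := norm_pos_iff.mpr hζ0
  set ω : E := lam⁻¹ • ζ with hωdef
  have hω : ‖ω‖ = 1 := by
    rw [hωdef, norm_smul, norm_inv, norm_norm, ← hlamdef, inv_mul_cancel₀ hlam0.ne']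
  have hωmem : ω ∈ ({0}ᶜ : Set E) := by
    simp only [mem_compl_iff, mem_singleton_iff]
    intro h; rw [h] at hω; simp at hω
  set L : E →L[ℝ] E := lam • ContinuousLinearMap.id ℝ E with hLdef
  set L' : E →L[ℝ] E := lam⁻¹ • ContinuousLinearMap.id ℝ E with hL'def
  have hLx : ∀ x : E, L x = lam • x := fun x => rfl
  have hL'x : ∀ x : E, L' x = lam⁻¹ • x := fun x => rfl
  have hpre : ⇑L ⁻¹' ({0}ᶜ : Set E) = ({0}ᶜ : Set E) := by
    ext x
    simp only [mem_preimage, mem_compl_iff, mem_singleton_iff, hLx, smul_eq_zero, not_or]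
    constructor
    · intro h; exact h.2
    · intro h; exact ⟨hlam0.ne', h⟩
  have hLω : L ω = ζ := by
    rw [hLx, hωdef, smul_smul, mul_inv_cancel₀ hlam0.ne', one_smul]
  have hiN' : (i : WithTop ℕ∞) ≤ (N : WithTop ℕ∞) := by exact_mod_cast hiN
  have hcompR : iteratedFDerivWithin ℝ i (v ∘ ⇑L) ({0}ᶜ) ω
      = (iteratedFDerivWithin ℝ i v ({0}ᶜ) ζ).compContinuousLinearMap (fun _ => L) := by
    have h := L.iteratedFDerivWithin_comp_right (f := v) hv hsu
      (by rw [hpre]; exact hsu) (x := ω) (by rw [hLω]; exact hζmem) hiN'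
    rw [hpre, hLω] at h
    exact h
  have hfun : v ∘ ⇑L = lam • v := by
    funext x
    simp only [Function.comp_apply, hLx, Pi.smul_apply, hvdef, norm_smul,
      Real.norm_eq_abs, abs_of_pos hlam0, smul_eq_mul]
  have hsmul : iteratedFDerivWithin ℝ i (lam • v) ({0}ᶜ) ω
      = lam • iteratedFDerivWithin ℝ i v ({0}ᶜ) ω :=
    iteratedFDerivWithin_const_smul_apply (hv.of_le hiN' ω hωmem) hsu hωmem
  have hstar : (iteratedFDerivWithin ℝ i v ({0}ᶜ) ζ).compContinuousLinearMap (fun _ => L)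
      = lam • iteratedFDerivWithin ℝ i v ({0}ᶜ) ω := by
    rw [← hcompR, hfun, hsmul]
  have hkey : iteratedFDerivWithin ℝ i v ({0}ᶜ) ζ
      = ((iteratedFDerivWithin ℝ i v ({0}ᶜ) ζ).compContinuousLinearMap
          (fun _ => L)).compContinuousLinearMap (fun _ => L') := by
    ext mv
    simp only [ContinuousMultilinearMap.compContinuousLinearMap_apply, hLx, hL'x]
    congr 1
    funext j
    rw [smul_smul, mul_inv_cancel₀ hlam0.ne', one_smul]
  have hnormL' : ‖L'‖ = lam⁻¹ := by
    have h1 := norm_smul (α := ℝ) (β := E →L[ℝ] E) lam⁻¹ (ContinuousLinearMap.id ℝ E)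
    rw [hL'def, h1, Real.norm_eq_abs, abs_of_pos (inv_pos.mpr hlam0),
      ContinuousLinearMap.norm_id, mul_one]
  have hBω : ‖iteratedFDerivWithin ℝ i v ({0}ᶜ) ω‖ ≤ M :=
    le_trans (hB i ω hω hiN) (hMB i hiN)
  have hnsmul := norm_smul (α := ℝ) lam (iteratedFDerivWithin ℝ i v ({0}ᶜ) ω)
  calc ‖iteratedFDerivWithin ℝ i v ({0}ᶜ) ζ‖
      = ‖((iteratedFDerivWithin ℝ i v ({0}ᶜ) ζ).compContinuousLinearMap
          (fun _ => L)).compContinuousLinearMap (fun _ => L')‖ := by rw [← hkey]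
    _ ≤ ‖(iteratedFDerivWithin ℝ i v ({0}ᶜ) ζ).compContinuousLinearMap (fun _ => L)‖
        * ∏ _j : Fin i, ‖L'‖ :=
      ContinuousMultilinearMap.norm_compContinuousLinearMap_le _ _
    _ = (lam * ‖iteratedFDerivWithin ℝ i v ({0}ᶜ) ω‖) * (lam⁻¹) ^ i := by
      rw [hstar, hnsmul, Real.norm_eq_abs, abs_of_pos hlam0]
      simp [hnormL', Finset.prod_const]
    _ ≤ (20 * M) ^ i := by
      obtain ⟨j, rfl⟩ : ∃ j, i = j + 1 := ⟨i - 1, (Nat.succ_pred_eq_of_pos hi1).symm⟩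
      have hinv : lam⁻¹ ≤ 20 := by
        rw [show (20:ℝ) = (1/20)⁻¹ by norm_num]
        exact inv_anti₀ (by norm_num) hζ
      have hinv0 : 0 ≤ lam⁻¹ := (inv_pos.mpr hlam0).le
      set X := ‖iteratedFDerivWithin ℝ (j+1) v ({0}ᶜ) ω‖ with hXdef
      have hX0 : 0 ≤ X := norm_nonneg _
      have h1 : (lam * X) * lam⁻¹ ^ (j+1) = X * lam⁻¹ ^ j := by
        rw [pow_succ, show lam * X * (lam⁻¹^j * lam⁻¹) = (lam * lam⁻¹) * (X * lam⁻¹^j) from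
          by ring, mul_inv_cancel₀ hlam0.ne', one_mul]
      rw [h1]
      have h2 : (lam⁻¹) ^ j ≤ 20 ^ j := pow_le_pow_left₀ hinv0 hinv j
      have hMj : 1 ≤ M ^ j := one_le_pow₀ hM1
      calc X * lam⁻¹^j ≤ M * 20^j := mul_le_mul hBω h2 (by positivity) (by linarith)
        _ = (M * 20^j) * 1 := (mul_one _).symm
        _ ≤ (M * 20^j) * (20 * M^j) := by
          apply mul_le_mul_of_nonneg_left (by nlinarith) (by positivity)
        _ = (20 * M) ^ (j+1) := by rw [mul_pow]; ring

lemma aux_pow_le_exp (x : ℝ) (hx : 0 ≤ x) (n : ℕ) : x ^ n ≤ n.factorial * Real.exp x := by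
  have h := Real.sum_le_exp_of_nonneg hx (n+1)
  have h2 : x ^ n / n.factorial ≤ Real.exp x :=
    le_trans (Finset.single_le_sum (f := fun i => x ^ i / i.factorial)
      (fun i _ => by positivity) (Finset.self_mem_range_succ n)) h
  have hf : (0:ℝ) < n.factorial := by exact_mod_cast n.factorial_pos
  rw [div_le_iff₀ hf] at h2
  linarith

lemma aux_small_bound (N : ℕ) (hN : 2 ≤ N) (Q : ℝ → ℝ)
    (hQreg : ContDiffOn ℝ N Q (Ici 0)) (hQ'0 : derivWithin Q (Ici 0) 0 = 0) :
    ∃ M : ℝ, 1 ≤ M ∧ (∀ i ≤ N, ∀ z ∈ Icc (0:ℝ) 1, |iteratedDerivWithin i Q (Ici 0) z| ≤ M)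
      ∧ ∀ z ∈ Icc (0:ℝ) 1, |iteratedDerivWithin 1 Q (Ici 0) z| ≤ M * z := by
  have hu : UniqueDiffOn ℝ (Ici (0:ℝ)) := uniqueDiffOn_Ici 0
  have hBex : ∀ i : ℕ, ∃ B : ℝ, ∀ z ∈ Icc (0:ℝ) 1, i ≤ N →
      |iteratedDerivWithin i Q (Ici 0) z| ≤ B := by
    intro i
    by_cases hi : i ≤ N
    · obtain ⟨x0, -, hmax⟩ := isCompact_Icc.exists_isMaxOn (f := fun z =>
        ‖iteratedFDerivWithin ℝ i Q (Ici 0) z‖)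
        ⟨0, left_mem_Icc.mpr zero_le_one⟩
        (((hQreg.continuousOn_iteratedFDerivWithin (by exact_mod_cast hi) hu).norm).mono
          Icc_subset_Ici_self)
      refine ⟨‖iteratedFDerivWithin ℝ i Q (Ici 0) x0‖, fun z hz _ => ?_⟩
      have h1 : |iteratedDerivWithin i Q (Ici 0) z| = ‖iteratedFDerivWithin ℝ i Q (Ici 0) z‖ := by
        rw [norm_iteratedFDerivWithin_eq_norm_iteratedDerivWithin, Real.norm_eq_abs]
      rw [h1]; exact hmax hz
    · exact ⟨0, fun _ _ h => absurd h hi⟩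
  choose B hB using hBex
  set M : ℝ := 1 + ∑ j ∈ Finset.range (N+1), |B j| with hMdef
  have hsumnn : (0:ℝ) ≤ ∑ j ∈ Finset.range (N+1), |B j| :=
    Finset.sum_nonneg fun j _ => abs_nonneg _
  have hM1 : 1 ≤ M := by simp only [hMdef]; linarith
  have hMB : ∀ i ≤ N, B i ≤ M := by
    intro i hi
    have : |B i| ≤ ∑ j ∈ Finset.range (N+1), |B j| :=
      Finset.single_le_sum (f := fun j => |B j|) (fun j _ => abs_nonneg _)
        (Finset.mem_range.2 (Nat.lt_succ_of_le hi))
    calc B i ≤ |B i| := le_abs_self _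
      _ ≤ _ := by simp only [hMdef]; linarith
  have hall : ∀ i ≤ N, ∀ z ∈ Icc (0:ℝ) 1, |iteratedDerivWithin i Q (Ici 0) z| ≤ M :=
    fun i hi z hz => le_trans (hB i z hz hi) (hMB i hi)
  refine ⟨M, hM1, hall, ?_⟩
  -- Lipschitz bound on first derivative
  intro z hz
  set f : ℝ → ℝ := iteratedDerivWithin 1 Q (Ici 0) with hfdef
  have hdiff : DifferentiableOn ℝ f (Ici 0) :=
    hQreg.differentiableOn_iteratedDerivWithin (by exact_mod_cast hN) hu
  have hbound : ∀ x ∈ Icc (0:ℝ) 1, ‖derivWithin f (Icc (0:ℝ) 1) x‖ ≤ M := by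
    intro x hx
    have hxI : x ∈ Ici (0:ℝ) := hx.1
    have hud : UniqueDiffWithinAt ℝ (Icc (0:ℝ) 1) x := (uniqueDiffOn_Icc one_pos) x hx
    have h1 : derivWithin f (Icc (0:ℝ) 1) x = derivWithin f (Ici 0) x :=
      derivWithin_subset Icc_subset_Ici_self hud (hdiff x hxI)
    have h2 : derivWithin f (Ici 0) x = iteratedDerivWithin 2 Q (Ici 0) x :=
      (congrFun (iteratedDerivWithin_succ (n := 1) (f := Q) (s := Ici 0)) x).symm
    rw [h1, h2, Real.norm_eq_abs]
    exact hall 2 hN x hx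
  have h0mem : (0:ℝ) ∈ Icc (0:ℝ) 1 := left_mem_Icc.mpr zero_le_one
  have hlip := Convex.norm_image_sub_le_of_norm_derivWithin_le
    (hdiff.mono Icc_subset_Ici_self) hbound (convex_Icc 0 1) h0mem hz
  have hf0 : f 0 = 0 := by
    rw [hfdef, iteratedDerivWithin_one]
    exact hQ'0
  rw [hf0, sub_zero, sub_zero, Real.norm_eq_abs, Real.norm_eq_abs, abs_of_nonneg hz.1] at hlip
  exact hlip

set_option maxHeartbeats 2000000 in
/-- Gaussian-type bounds for derivatives of `ζ ↦ exp(−r·Q(μ·|ζ|))`, uniformly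
over `|ζ| ≥ 1/20`, for `Q` N-times continuously differentiable with `Q(0) = Q'(0) = 0`,
`Q(z) ≥ c₀·z²`, and `|z^m·Q^{(m)}(z)| ≤ C_δ·Q(z)^{1+δ}` for `z ≥ 1`. -/
theorem stmt_15 (d N : ℕ) (hd : 1 ≤ d) (hN : 2 ≤ N)
    (Q : ℝ → ℝ) (hQreg : ContDiffOn ℝ N Q (Ici 0))
    (hQ0 : Q 0 = 0)
    (hQ'0 : derivWithin Q (Ici 0) 0 = 0)
    (c₀ : ℝ) (hc₀ : 0 < c₀)
    (hlow : ∀ z : ℝ, 0 ≤ z → c₀ * z ^ 2 ≤ Q z)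
    (hder : ∀ δ : ℝ, 0 < δ → ∃ Cδ : ℝ, 0 < Cδ ∧ ∀ z : ℝ, 1 ≤ z → ∀ m : ℕ, m ≤ N →
      |z ^ m * iteratedDerivWithin m Q (Ici 0) z| ≤ Cδ * Q z ^ (1 + δ)) :
    ∃ c : ℝ, 0 < c ∧ ∀ δ ∈ Ioo (0:ℝ) 1, ∃ C : ℝ, 0 < C ∧
      ∀ r : ℝ, 0 < r → ∀ μ : ℝ, 0 < μ → ∀ m : ℕ, m ≤ N →
        ∀ ζ : EuclideanSpace ℝ (Fin d), 1 / 20 ≤ ‖ζ‖ →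
          ‖iteratedFDeriv ℝ m
              (fun ξ : EuclideanSpace ℝ (Fin d) => Real.exp (-(r * Q (μ * ‖ξ‖)))) ζ‖ ≤
            C * (1 + r ^ (-(δ / 2))) * Real.exp (-(c * r * μ ^ 2)) := by
  classical
  have hsopen : IsOpen ({0}ᶜ : Set (EuclideanSpace ℝ (Fin d))) := isOpen_compl_singleton
  have hsu : UniqueDiffOn ℝ ({0}ᶜ : Set (EuclideanSpace ℝ (Fin d))) := hsopen.uniqueDiffOn
  have huIci : UniqueDiffOn ℝ (Ici (0:ℝ)) := uniqueDiffOn_Ici 0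
  obtain ⟨M, hM1, hMall, hM1z⟩ := aux_small_bound N hN Q hQreg hQ'0
  obtain ⟨K, hK1, hKb⟩ := aux_norm_deriv_bound d N hd
  have hM0 : (0:ℝ) < M := lt_of_lt_of_le one_pos hM1
  have hK0 : (0:ℝ) < K := lt_of_lt_of_le one_pos hK1
  refine ⟨c₀ / 800, by positivity, ?_⟩
  rintro δ' ⟨hδ'0, hδ'1⟩
  have hNR : (2:ℝ) ≤ (N:ℝ) := by exact_mod_cast hN
  have hNR0 : (0:ℝ) < (N:ℝ) := by linarith
  set δ : ℝ := δ' / (2 * N) with hδdef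
  have hδ0 : 0 < δ := by rw [hδdef]; positivity
  have hδ1 : δ ≤ 1 := by
    rw [hδdef, div_le_one (by linarith)]
    linarith
  obtain ⟨Cδ, hCδ0, hCd⟩ := hder δ hδ0
  have h20N0 : (0:ℝ) < 20 ^ N := by positivity
  set KQ : ℝ := 20^N * Cδ + 20^N * M / c₀ + 20 * M / c₀ + 1 with hKQdef
  have hKQ1 : 1 ≤ KQ := by
    have h1 : (0:ℝ) ≤ 20^N * Cδ := by positivity
    have h2 : (0:ℝ) ≤ 20^N * M / c₀ := by positivity
    have h3 : (0:ℝ) ≤ 20 * M / c₀ := by positivity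
    rw [hKQdef]; linarith
  have hKQ0 : (0:ℝ) < KQ := lt_of_lt_of_le one_pos hKQ1
  set c₁ : ℝ := 1 + N.factorial * KQ * K^N with hc₁def
  have hNf0 : (0:ℝ) < N.factorial := by exact_mod_cast N.factorial_pos
  have hc₁1 : 1 ≤ c₁ := by
    have : (0:ℝ) ≤ N.factorial * KQ * K^N := by positivity
    rw [hc₁def]; linarith
  have hc₁0 : (0:ℝ) < c₁ := lt_of_lt_of_le one_pos hc₁1
  set C₂ : ℝ := 2^(2*N) * (2*N).factorial * Real.exp (1/2) with hC₂def
  have hC₂0 : (0:ℝ) < C₂ := by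
    have : (0:ℝ) < (2*N).factorial := by exact_mod_cast (2*N).factorial_pos
    rw [hC₂def]; positivity
  refine ⟨N.factorial * c₁^N * C₂ * 2^N, by positivity, ?_⟩
  intro r hr μ hμ m hm ζ hζ
  have hζ0 : ζ ≠ 0 := by
    intro h; rw [h] at hζ; simp at hζ; linarith
  have hζmem : ζ ∈ ({0}ᶜ : Set (EuclideanSpace ℝ (Fin d))) := hζ0
  set t : ℝ := ‖ζ‖ with htdef
  have ht0 : 0 < t := norm_pos_iff.mpr hζ0
  set z : ℝ := μ * t with hzdef
  have hz0 : 0 < z := mul_pos hμ ht0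
  have hQzlow : c₀ * z^2 ≤ Q z := hlow z hz0.le
  have hQz0 : 0 < Q z := lt_of_lt_of_le (by positivity) hQzlow
  set T : ℝ := r * Q z with hTdef
  have hT0 : 0 < T := mul_pos hr hQz0
  have hrd0 : 0 < r ^ (-δ) := Real.rpow_pos_of_pos hr _
  set A : ℝ := (1 + r ^ (-δ)) * (1 + T)^2 with hAdef
  have hA1 : 1 ≤ A := by
    have h2 : (1:ℝ) ≤ (1+T)^2 := one_le_pow₀ (by linarith)
    rw [hAdef]
    calc (1:ℝ) = 1 * 1 := by ring
      _ ≤ (1 + r ^ (-δ)) * (1+T)^2 := mul_le_mul (by linarith) h2 (by norm_num) (by linarith)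
  have hA0 : (0:ℝ) < A := lt_of_lt_of_le one_pos hA1
  set w : ℝ → ℝ := fun s => -(r * Q (μ * s)) with hwdef
  set v : (EuclideanSpace ℝ (Fin d)) → ℝ := fun x => ‖x‖ with hvdef
  have hvC : ContDiffOn ℝ N v ({0}ᶜ) := fun x hx =>
    (contDiffAt_norm ℝ (by simpa using hx)).contDiffWithinAt
  set cneg : ℝ →L[ℝ] ℝ := (-r) • ContinuousLinearMap.id ℝ ℝ with hcnegdef
  set Lμ : ℝ →L[ℝ] ℝ := μ • ContinuousLinearMap.id ℝ ℝ with hLμdef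
  have hcnegx : ∀ y : ℝ, cneg y = -(r * y) := fun y => by
    simp [hcnegdef, smul_eq_mul]
  have hLμx : ∀ s : ℝ, Lμ s = μ * s := fun s => by
    simp [hLμdef, smul_eq_mul]
  have hweq : w = (⇑cneg ∘ Q) ∘ ⇑Lμ := by
    funext s
    simp only [hwdef, Function.comp_apply, hcnegx, hLμx]
  have hpreμ : ⇑Lμ ⁻¹' (Ici 0) = Ici (0:ℝ) := by
    ext x
    simp only [mem_preimage, mem_Ici, hLμx]
    constructor
    · intro h
      by_contra hx
      push_neg at hx
      exact absurd h (not_le.mpr (mul_neg_of_pos_of_neg hμ hx))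
    · intro h; exact mul_nonneg hμ.le h
  have hcQ : ContDiffOn ℝ N (⇑cneg ∘ Q) (Ici 0) := cneg.contDiff.comp_contDiffOn hQreg
  have hwC : ContDiffOn ℝ N w (Ici 0) := by
    rw [hweq, ← hpreμ]; exact hcQ.comp_continuousLinearMap Lμ
  have hcnegn : ‖cneg‖ = r := by
    have h1 := norm_smul (α := ℝ) (β := ℝ →L[ℝ] ℝ) (-r) (ContinuousLinearMap.id ℝ ℝ)
    rw [hcnegdef, h1, Real.norm_eq_abs, abs_neg, abs_of_pos hr,
      ContinuousLinearMap.norm_id, mul_one]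
  have hLμn : ‖Lμ‖ = μ := by
    have h1 := norm_smul (α := ℝ) (β := ℝ →L[ℝ] ℝ) μ (ContinuousLinearMap.id ℝ ℝ)
    rw [hLμdef, h1, Real.norm_eq_abs, abs_of_pos hμ, ContinuousLinearMap.norm_id, mul_one]
  -- derivative bounds for w
  have hwb : ∀ i, i ≤ N → ‖iteratedFDerivWithin ℝ i w (Ici 0) t‖
      ≤ r * μ^i * |iteratedDerivWithin i Q (Ici 0) z| := by
    intro i hi
    have hi' : (i : WithTop ℕ∞) ≤ (N : WithTop ℕ∞) := by exact_mod_cast hi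
    have hLμt : Lμ t = z := by rw [hLμx]
    have h1 : iteratedFDerivWithin ℝ i ((⇑cneg ∘ Q) ∘ ⇑Lμ) (⇑Lμ ⁻¹' Ici 0) t
        = (iteratedFDerivWithin ℝ i (⇑cneg ∘ Q) (Ici 0) (Lμ t)).compContinuousLinearMap
            (fun _ => Lμ) :=
      Lμ.iteratedFDerivWithin_comp_right hcQ huIci (by rw [hpreμ]; exact huIci)
        (by rw [hLμt]; exact hz0.le) hi'
    have h2 : iteratedFDerivWithin ℝ i (⇑cneg ∘ Q) (Ici 0) z
        = cneg.compContinuousMultilinearMap (iteratedFDerivWithin ℝ i Q (Ici 0) z) :=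
      cneg.iteratedFDerivWithin_comp_left (hQreg z hz0.le) huIci hz0.le hi'
    have heq : iteratedFDerivWithin ℝ i w (Ici 0) t
        = (cneg.compContinuousMultilinearMap
            (iteratedFDerivWithin ℝ i Q (Ici 0) z)).compContinuousLinearMap (fun _ => Lμ) := by
      conv_lhs => rw [hweq, ← hpreμ]
      rw [h1, hLμt, h2]
    rw [heq]
    have hb1 := ContinuousMultilinearMap.norm_compContinuousLinearMap_le
      (cneg.compContinuousMultilinearMap (iteratedFDerivWithin ℝ i Q (Ici 0) z)) (fun _ : Fin i => Lμ)
    have hb2 := cneg.norm_compContinuousMultilinearMap_le (iteratedFDerivWithin ℝ i Q (Ici 0) z)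
    have hQn : ‖iteratedFDerivWithin ℝ i Q (Ici 0) z‖ = |iteratedDerivWithin i Q (Ici 0) z| := by
      rw [norm_iteratedFDerivWithin_eq_norm_iteratedDerivWithin, Real.norm_eq_abs]
    have hprod : (∏ _j : Fin i, ‖Lμ‖) = μ ^ i := by
      simp [hLμn, Finset.prod_const]
    have hprodnn : (0:ℝ) ≤ ∏ _j : Fin i, ‖Lμ‖ := Finset.prod_nonneg fun _ _ => norm_nonneg _
    calc ‖(cneg.compContinuousMultilinearMap
            (iteratedFDerivWithin ℝ i Q (Ici 0) z)).compContinuousLinearMap (fun _ => Lμ)‖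
        ≤ ‖cneg.compContinuousMultilinearMap (iteratedFDerivWithin ℝ i Q (Ici 0) z)‖
            * ∏ _j : Fin i, ‖Lμ‖ := hb1
      _ ≤ (‖cneg‖ * ‖iteratedFDerivWithin ℝ i Q (Ici 0) z‖) * ∏ _j : Fin i, ‖Lμ‖ :=
          mul_le_mul_of_nonneg_right hb2 hprodnn
      _ = r * μ^i * |iteratedDerivWithin i Q (Ici 0) z| := by
          rw [hcnegn, hQn, hprod]; ring
  -- μ ≤ 20 z
  have hμ20 : μ ≤ 20 * z := by
    have h1 : μ * (1/20) ≤ μ * t := mul_le_mul_of_nonneg_left hζ hμ.le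
    rw [hzdef]; linarith
  -- uniform bound on derivatives of w at t
  have hCw : ∀ i, i ≤ N → ‖iteratedFDerivWithin ℝ i w (Ici 0) (v ζ)‖ ≤ KQ * A := by
    intro i hiN
    have hq := hwb i hiN
    have hvζ : v ζ = t := rfl
    rw [hvζ]
    refine le_trans hq ?_
    by_cases h1z : 1 ≤ z
    · -- big z
      have habs : z^i * |iteratedDerivWithin i Q (Ici 0) z|
          = |z^i * iteratedDerivWithin i Q (Ici 0) z| := by
        rw [abs_mul, abs_of_pos (pow_pos hz0 i)]
      have hD := hCd z h1z i hiN
      have hμi : μ^i ≤ (20*z)^i := pow_le_pow_left₀ hμ.le hμ20 i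
      have hQδ : Q z ^ δ ≤ (1 + T) * r ^ (-δ) := by
        have hQzr : Q z = T * r⁻¹ := by rw [hTdef]; field_simp
        rw [hQzr, Real.mul_rpow hT0.le (inv_nonneg.mpr hr.le), Real.inv_rpow hr.le,
          ← Real.rpow_neg hr.le]
        have hTδ : T ^ δ ≤ 1 + T := by
          rcases le_total T 1 with hT1 | hT1
          · exact le_trans (Real.rpow_le_one hT0.le hT1 hδ0.le) (by linarith)
          · calc T ^ δ ≤ T ^ (1:ℝ) := Real.rpow_le_rpow_of_exponent_le hT1 hδ1
              _ = T := Real.rpow_one T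
              _ ≤ 1 + T := by linarith
        exact mul_le_mul_of_nonneg_right hTδ hrd0.le
      have hr1δ : r * Q z ^ (1+δ) ≤ A := by
        have he : Q z ^ (1+δ) = Q z * Q z ^ δ := by
          rw [Real.rpow_add hQz0, Real.rpow_one]
        rw [he]
        calc r * (Q z * Q z ^ δ) = T * Q z ^ δ := by rw [hTdef]; ring
          _ ≤ T * ((1+T) * r^(-δ)) := mul_le_mul_of_nonneg_left hQδ hT0.le
          _ ≤ (1+T) * ((1+T) * r^(-δ)) :=
              mul_le_mul_of_nonneg_right (by linarith) (by positivity)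
          _ = r^(-δ) * (1+T)^2 := by ring
          _ ≤ (1 + r^(-δ)) * (1+T)^2 :=
              mul_le_mul_of_nonneg_right (by linarith) (by positivity)
          _ = A := hAdef.symm
      have habs0 : (0:ℝ) ≤ |iteratedDerivWithin i Q (Ici 0) z| := abs_nonneg _
      calc r * μ^i * |iteratedDerivWithin i Q (Ici 0) z|
          ≤ r * (20*z)^i * |iteratedDerivWithin i Q (Ici 0) z| :=
            mul_le_mul_of_nonneg_right (mul_le_mul_of_nonneg_left hμi hr.le) habs0
        _ = 20^i * (r * (z^i * |iteratedDerivWithin i Q (Ici 0) z|)) := by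
            rw [mul_pow]; ring
        _ = 20^i * (r * |z^i * iteratedDerivWithin i Q (Ici 0) z|) := by rw [habs]
        _ ≤ 20^i * (r * (Cδ * Q z ^ (1+δ))) := by
            apply mul_le_mul_of_nonneg_left (mul_le_mul_of_nonneg_left hD hr.le) (by positivity)
        _ = 20^i * Cδ * (r * Q z ^ (1+δ)) := by ring
        _ ≤ 20^N * Cδ * A := by
            have h20 : (20:ℝ)^i ≤ 20^N := pow_le_pow_right₀ (by norm_num) hiN
            have hrQ0 : (0:ℝ) ≤ r * Q z ^ (1+δ) := by positivity
            have := mul_le_mul (mul_le_mul_of_nonneg_right h20 hCδ0.le) hr1δ hrQ0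
              (by positivity)
            linarith
        _ ≤ KQ * A := by
            have hKQge : 20^N * Cδ ≤ KQ := by
              have h2 : (0:ℝ) ≤ 20^N * M / c₀ := by positivity
              have h3 : (0:ℝ) ≤ 20 * M / c₀ := by positivity
              rw [hKQdef]; linarith
            exact mul_le_mul_of_nonneg_right hKQge hA0.le
    · -- small z
      push_neg at h1z
      have hzIcc : z ∈ Icc (0:ℝ) 1 := ⟨hz0.le, h1z.le⟩
      have hTB : r * z^2 ≤ T / c₀ := by
        rw [le_div_iff₀ hc₀]
        have h := mul_le_mul_of_nonneg_left hQzlow hr.le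
        rw [hTdef]
        linarith [h]
      have h1TA : 1 + T ≤ A := by
        have h2 : (1+T) ≤ (1+T)^2 := le_self_pow₀ (by linarith) (by norm_num)
        have h3 : (1+T)^2 ≤ (1 + r^(-δ)) * (1+T)^2 := by
          calc (1+T)^2 = 1 * (1+T)^2 := by ring
            _ ≤ (1 + r^(-δ)) * (1+T)^2 :=
                mul_le_mul_of_nonneg_right (by linarith) (by positivity)
        rw [hAdef]; linarith
      have hTA : T ≤ A := by linarith
      rcases Nat.lt_or_ge i 2 with hi2 | hi2
      · interval_cases i
        · -- i = 0
          have h0 : |iteratedDerivWithin 0 Q (Ici 0) z| = Q z := by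
            rw [iteratedDerivWithin_zero, abs_of_pos hQz0]
          rw [h0, pow_zero, mul_one]
          calc r * Q z = T := rfl
            _ ≤ A := hTA
            _ ≤ KQ * A := le_mul_of_one_le_left hA0.le hKQ1
        · -- i = 1
          have hQ'z := hM1z z hzIcc
          have hrz : r * μ ≤ r * (20*z) := mul_le_mul_of_nonneg_left hμ20 hr.le
          calc r * μ^1 * |iteratedDerivWithin 1 Q (Ici 0) z|
              ≤ (r * (20*z)) * (M*z) := by
                rw [pow_one]
                exact mul_le_mul hrz hQ'z (abs_nonneg _) (by positivity)
            _ = 20*M*(r*z^2) := by ring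
            _ ≤ 20*M*(T/c₀) := mul_le_mul_of_nonneg_left hTB (by positivity)
            _ = (20*M/c₀)*T := by ring
            _ ≤ (20*M/c₀)*A := mul_le_mul_of_nonneg_left hTA (by positivity)
            _ ≤ KQ * A := by
                apply mul_le_mul_of_nonneg_right _ hA0.le
                have h1 : (0:ℝ) ≤ 20^N * Cδ := by positivity
                have h2 : (0:ℝ) ≤ 20^N * M / c₀ := by positivity
                rw [hKQdef]; linarith
      · -- i ≥ 2
        have hQi := hMall i hiN z hzIcc
        have hzi : z^i ≤ z^2 := pow_le_pow_of_le_one hz0.le h1z.le hi2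
        have hμi : μ^i ≤ (20*z)^i := pow_le_pow_left₀ hμ.le hμ20 i
        have h20 : (20:ℝ)^i ≤ 20^N := pow_le_pow_right₀ (by norm_num) hiN
        calc r * μ^i * |iteratedDerivWithin i Q (Ici 0) z|
            ≤ r * (20*z)^i * M := by
              apply mul_le_mul (mul_le_mul_of_nonneg_left hμi hr.le) hQi (abs_nonneg _)
                (by positivity)
          _ = 20^i * M * (r * z^i) := by rw [mul_pow]; ring
          _ ≤ 20^N * M * (r * z^2) := by
              apply mul_le_mul (mul_le_mul_of_nonneg_right h20 hM0.le)
                (mul_le_mul_of_nonneg_left hzi hr.le) (by positivity) (by positivity)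
          _ ≤ 20^N * M * (T/c₀) := mul_le_mul_of_nonneg_left hTB (by positivity)
          _ = (20^N*M/c₀)*T := by ring
          _ ≤ (20^N*M/c₀)*A := mul_le_mul_of_nonneg_left hTA (by positivity)
          _ ≤ KQ * A := by
              apply mul_le_mul_of_nonneg_right _ hA0.le
              have h1 : (0:ℝ) ≤ 20^N * Cδ := by positivity
              have h3 : (0:ℝ) ≤ 20 * M / c₀ := by positivity
              rw [hKQdef]; linarith
  -- inner composition
  have hmapsT : MapsTo v ({0}ᶜ) (Ici 0) := fun x _ => norm_nonneg x
  set D₁ : ℝ := 1 + N.factorial * KQ * K^N * A with hD₁def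
  have hD₁1 : 1 ≤ D₁ := by
    have : (0:ℝ) ≤ N.factorial * KQ * K^N * A := by positivity
    rw [hD₁def]; linarith
  have hDu : ∀ i, 1 ≤ i → i ≤ m → ‖iteratedFDerivWithin ℝ i (w ∘ v) ({0}ᶜ) ζ‖ ≤ D₁ ^ i := by
    intro i hi1 him
    have hiN : i ≤ N := le_trans him hm
    have h := norm_iteratedFDerivWithin_comp_le (g := w) (f := v) hwC hvC
      (by exact_mod_cast hiN) huIci hsu hmapsT hζmem
      (fun j hj => hCw j (le_trans hj hiN))
      (fun j hj1 hj2 => hKb j hj1 (le_trans hj2 hiN) ζ hζ)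
    refine le_trans h ?_
    have h1 : (i.factorial : ℝ) ≤ N.factorial := by exact_mod_cast Nat.factorial_le hiN
    have h2 : K^i ≤ K^N := pow_le_pow_right₀ hK1 hiN
    have hstep : (i.factorial : ℝ) * (KQ * A) * K^i ≤ N.factorial * KQ * K^N * A := by
      have hif0 : (0:ℝ) < i.factorial := by exact_mod_cast i.factorial_pos
      calc (i.factorial : ℝ) * (KQ * A) * K^i ≤ (N.factorial : ℝ) * (KQ * A) * K^N := by
            apply mul_le_mul (mul_le_mul_of_nonneg_right h1 (by positivity)) h2
              (by positivity) (by positivity)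
        _ = N.factorial * KQ * K^N * A := by ring
    refine le_trans hstep (le_trans ?_ (le_self_pow₀ hD₁1 (by omega)))
    rw [hD₁def]; linarith
  -- outer composition
  have hexpC : ContDiffOn ℝ N Real.exp univ := Real.contDiff_exp.contDiffOn
  have hwv : ContDiffOn ℝ N (w ∘ v) ({0}ᶜ) := hwC.comp hvC hmapsT
  have hCexp : ∀ i, i ≤ m →
      ‖iteratedFDerivWithin ℝ i Real.exp univ ((w ∘ v) ζ)‖ ≤ Real.exp (-T) := by
    intro i _
    rw [iteratedFDerivWithin_univ, norm_iteratedFDeriv_eq_norm_iteratedDeriv,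
      iteratedDeriv_eq_iterate, Real.iter_deriv_exp, Real.norm_eq_abs, Real.abs_exp]
    apply le_of_eq
    congr 1
  have hfinal := norm_iteratedFDerivWithin_comp_le (g := Real.exp) (f := w ∘ v) hexpC hwv
    (by exact_mod_cast hm) uniqueDiffOn_univ hsu (mapsTo_univ _ _) hζmem hCexp hDu
  have hgoalfun : (fun ξ : EuclideanSpace ℝ (Fin d) => Real.exp (-(r * Q (μ * ‖ξ‖))))
      = Real.exp ∘ (w ∘ v) := rfl
  rw [hgoalfun, ← iteratedFDerivWithin_of_isOpen (𝕜 := ℝ) m hsopen hζmem]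
  refine le_trans hfinal ?_
  -- final arithmetic
  have hmfact : (m.factorial : ℝ) ≤ N.factorial := by exact_mod_cast Nat.factorial_le hm
  have hD₁A : D₁ ≤ c₁ * A := by
    have hx0 : (0:ℝ) ≤ N.factorial * KQ * K^N := by positivity
    have he : (1 + N.factorial * KQ * K^N) * A
        = A + (N.factorial * KQ * K^N) * A := by ring
    rw [hD₁def, hc₁def, he]
    have h2 : N.factorial * KQ * K^N * A = (N.factorial * KQ * K^N) * A := by ring
    rw [h2]
    linarith
  have hD₁m : D₁^m ≤ c₁^N * ((1 + r^(-δ))^N * (1+T)^(2*N)) := by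
    calc D₁^m ≤ D₁^N := pow_le_pow_right₀ hD₁1 hm
      _ ≤ (c₁*A)^N := pow_le_pow_left₀ (by linarith) hD₁A N
      _ = c₁^N * ((1+r^(-δ))^N * (1+T)^(2*N)) := by
          rw [mul_pow, hAdef, mul_pow, ← pow_mul]
  have hxN : (r^(-δ))^N = r^(-(δ'/2)) := by
    rw [← Real.rpow_natCast (r^(-δ)) N, ← Real.rpow_mul hr.le]
    congr 1
    rw [hδdef]
    field_simp
  have hX0 : 0 < r ^ (-(δ'/2)) := Real.rpow_pos_of_pos hr _
  have hxbound : (1 + r^(-δ))^N ≤ 2^N * (1 + r^(-(δ'/2))) := by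
    rcases le_total (r^(-δ)) 1 with hc | hc
    · calc (1 + r^(-δ))^N ≤ 2^N := by
            apply pow_le_pow_left₀ (by positivity) (by linarith) N
        _ ≤ 2^N * (1 + r^(-(δ'/2))) := le_mul_of_one_le_right (by positivity) (by linarith)
    · calc (1 + r^(-δ))^N ≤ (2 * r^(-δ))^N := by
            apply pow_le_pow_left₀ (by positivity) (by linarith) N
        _ = 2^N * (r^(-δ))^N := mul_pow 2 _ N
        _ = 2^N * r^(-(δ'/2)) := by rw [hxN]
        _ ≤ 2^N * (1 + r^(-(δ'/2))) := by
            apply mul_le_mul_of_nonneg_left (by linarith) (by positivity)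
  have hpoly : Real.exp (-T) * (1+T)^(2*N) ≤ C₂ * Real.exp (-(T/2)) := by
    have h1 : (1+T)^(2*N) = 2^(2*N) * ((1+T)/2)^(2*N) := by
      rw [← mul_pow]
      congr 1
      ring
    have h2 : ((1+T)/2)^(2*N) ≤ (2*N).factorial * Real.exp ((1+T)/2) :=
      aux_pow_le_exp _ (by linarith) _
    have h3 : Real.exp ((1+T)/2) = Real.exp (1/2) * Real.exp (T/2) := by
      rw [← Real.exp_add]; congr 1; ring
    have h4 : (1+T)^(2*N) ≤ C₂ * Real.exp (T/2) := by
      rw [h1, hC₂def]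
      calc (2:ℝ)^(2*N) * ((1+T)/2)^(2*N) ≤ 2^(2*N) * ((2*N).factorial * Real.exp ((1+T)/2)) :=
            mul_le_mul_of_nonneg_left h2 (by positivity)
        _ = 2^(2*N) * (2*N).factorial * Real.exp (1/2) * Real.exp (T/2) := by
            rw [h3]; ring
    calc Real.exp (-T) * (1+T)^(2*N) ≤ Real.exp (-T) * (C₂ * Real.exp (T/2)) :=
          mul_le_mul_of_nonneg_left h4 (Real.exp_pos _).le
      _ = C₂ * (Real.exp (-T) * Real.exp (T/2)) := by ring
      _ = C₂ * Real.exp (-(T/2)) := by rw [← Real.exp_add]; ring_nf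
  have hdecay : Real.exp (-(T/2)) ≤ Real.exp (-(c₀/800 * r * μ^2)) := by
    apply Real.exp_le_exp.mpr
    apply neg_le_neg
    have ht2 : (1/20:ℝ)^2 ≤ t^2 := by
      apply pow_le_pow_left₀ (by norm_num) hζ
    have hz2 : z^2 = μ^2 * t^2 := by rw [hzdef]; ring
    have hh := mul_le_mul_of_nonneg_left ht2 (show (0:ℝ) ≤ c₀ * μ^2 by positivity)
    have hQ2 : c₀ * (μ^2 * (1/400)) ≤ Q z := by
      refine le_trans ?_ hQzlow
      rw [hz2]
      linarith [hh]
    have h5 := mul_le_mul_of_nonneg_left hQ2 hr.le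
    have h6 : c₀ * r * μ^2 * (1/400) ≤ T := by
      rw [hTdef]
      linarith [h5]
    linarith
  -- assemble
  calc (m.factorial : ℝ) * Real.exp (-T) * D₁^m
      ≤ (N.factorial : ℝ) * Real.exp (-T) * (c₁^N * ((1 + r^(-δ))^N * (1+T)^(2*N))) := by
        apply mul_le_mul (mul_le_mul_of_nonneg_right hmfact (Real.exp_pos _).le) hD₁m
          (by positivity) (by positivity)
    _ = (N.factorial : ℝ) * c₁^N * ((1 + r^(-δ))^N) * (Real.exp (-T) * (1+T)^(2*N)) := by
        ring
    _ ≤ (N.factorial : ℝ) * c₁^N * (2^N * (1 + r^(-(δ'/2)))) * (C₂ * Real.exp (-(T/2))) := by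
        apply mul_le_mul (mul_le_mul_of_nonneg_left hxbound (by positivity)) hpoly
          (by positivity) (by positivity)
    _ ≤ (N.factorial : ℝ) * c₁^N * (2^N * (1 + r^(-(δ'/2))))
          * (C₂ * Real.exp (-(c₀/800 * r * μ^2))) := by
        apply mul_le_mul_of_nonneg_left (mul_le_mul_of_nonneg_left hdecay hC₂0.le)
          (by positivity)
    _ = (N.factorial : ℝ) * c₁^N * C₂ * 2^N * (1 + r^(-(δ'/2)))
          * Real.exp (-(c₀/800 * r * μ^2)) := by ring
end
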